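/- Let α, β ∈ ℝ and define X : ℝ² → ℝ⁴ by X(u, v) := α·(u, v, −e^{−v}·sin u, e^{−v}·sin u) + β·(v, −u, e^{−v}·cos u, −e^{−v}·cos u) + (sinh u · sin u, sinh u · cos u, cosh u · sinh v, cosh u · cosh v). Then for all (u, v) ∈ ℝ²: (i) ⟨∂_u X, ∂_u X⟩ = ⟨∂_v X, ∂_v X⟩ = (α + cosh u · sin u)² + (−β + cosh u · cos u)² and ⟨∂_u X, ∂_v X⟩ = 0, where ⟨·,·⟩ is the Lorentz bilinear form on ℝ⁴; (ii) ∂_u∂_u X + ∂_v∂_v X = 2·cosh u · (cos u, −sin u, sinh v, cosh v), which is a nonzero Lorentz-null vector at every point of ℝ². In particular, if α² + β² < 1, then X is a conformal spacelike parametrization of a marginally trapped surface in Lorentz–Minkowski space 𝕃⁴ whose mean curvature vector vanishes nowhere. -/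

import Mathlib

/-- The Lorentz bilinear form on ℝ⁴ (Lorentz–Minkowski space 𝕃⁴). -/
def lorR (x y : Fin 4 → ℝ) : ℝ := x 0 * y 0 + x 1 * y 1 + x 2 * y 2 - x 3 * y 3

/-- Partial derivative of a map `ℝ² → ℝ⁴` in the first variable. -/
noncomputable def pd1 (X : ℝ → ℝ → Fin 4 → ℝ) (u v : ℝ) : Fin 4 → ℝ :=
  fun i => deriv (fun t => X t v i) u

/-- Partial derivative of a map `ℝ² → ℝ⁴` in the second variable. -/
noncomputable def pd2 (X : ℝ → ℝ → Fin 4 → ℝ) (u v : ℝ) : Fin 4 → ℝ :=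
  fun i => deriv (fun t => X u t i) v

/-- Second partial derivative `∂_u ∂_u` of a map `ℝ² → ℝ⁴`. -/
noncomputable def pd11 (X : ℝ → ℝ → Fin 4 → ℝ) (u v : ℝ) : Fin 4 → ℝ :=
  fun i => deriv (fun t => deriv (fun s => X s v i) t) u

/-- Second partial derivative `∂_v ∂_v` of a map `ℝ² → ℝ⁴`. -/
noncomputable def pd22 (X : ℝ → ℝ → Fin 4 → ℝ) (u v : ℝ) : Fin 4 → ℝ :=
  fun i => deriv (fun t => deriv (fun s => X u s i) t) v

/-!
Everything is elementary calculus: `X_u`, `X_v` and `X_uu + X_vv` have closed forms, and the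
conformality relations reduce to `sin² + cos² = 1`, `cosh² - sinh² = 1` and
`e^{-v} (sinh v + cosh v) = 1`. The vector `(cos u, -sin u, sinh v, cosh v)` is null because
`cos² + sin² = cosh² - sinh²`, and it is nonzero since its last entry is positive. The conformal
factor is the squared distance from `(-α, β)` to `cosh u • (sin u, cos u)`; the latter point has
norm `cosh u ≥ 1`, so the factor is positive when `(-α, β)` lies in the open unit disk.
-/

open Real

noncomputable def trappedSurface (α β : ℝ) (u v : ℝ) : Fin 4 → ℝ :=
  α • ![u, v, -(exp (-v) * sin u), exp (-v) * sin u]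
    + β • ![v, -u, exp (-v) * cos u, -(exp (-v) * cos u)]
    + ![sinh u * sin u, sinh u * cos u, cosh u * sinh v, cosh u * cosh v]

lemma pd1_trappedSurface (α β u v : ℝ) :
    pd1 (trappedSurface α β) u v =
      ![α + cosh u * sin u + sinh u * cos u, -β + cosh u * cos u - sinh u * sin u,
        sinh u * sinh v - exp (-v) * (α * cos u + β * sin u),
        sinh u * cosh v + exp (-v) * (α * cos u + β * sin u)] := by
  ext i; fin_cases i <;> simp (disch := fun_prop) [pd1, trappedSurface] <;> ring

lemma pd2_trappedSurface (α β u v : ℝ) :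
    pd2 (trappedSurface α β) u v =
      ![β, α, cosh u * cosh v + exp (-v) * (α * sin u - β * cos u),
        cosh u * sinh v - exp (-v) * (α * sin u - β * cos u)] := by
  ext i; fin_cases i <;> simp (disch := fun_prop) [pd2, trappedSurface] <;> ring

lemma pd11_add_pd22_trappedSurface (α β u v : ℝ) :
    pd11 (trappedSurface α β) u v + pd22 (trappedSurface α β) u v
      = (2 * cosh u) • ![cos u, -sin u, sinh v, cosh v] := by
  ext i; fin_cases i <;> simp (disch := fun_prop) [pd11, pd22, trappedSurface] <;> ring

lemma exp_neg_mul_sinh_add_cosh (v : ℝ) : exp (-v) * (sinh v + cosh v) = 1 := by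
  rw [sinh_add_cosh, ← exp_add, neg_add_cancel, exp_zero]

lemma lorR_pd1_trappedSurface (α β u v : ℝ) :
    lorR (pd1 (trappedSurface α β) u v) (pd1 (trappedSurface α β) u v)
      = (α + cosh u * sin u) ^ 2 + (-β + cosh u * cos u) ^ 2 := by
  have h := exp_neg_mul_sinh_add_cosh v
  simp only [lorR, pd1_trappedSurface, Matrix.cons_val_zero, Matrix.cons_val_one, Matrix.cons_val]
  linear_combination sinh u ^ 2 * sin_sq_add_cos_sq u - sinh u ^ 2 * cosh_sq_sub_sinh_sq v
    - 2 * sinh u * (α * cos u + β * sin u) * h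

lemma lorR_pd2_trappedSurface (α β u v : ℝ) :
    lorR (pd2 (trappedSurface α β) u v) (pd2 (trappedSurface α β) u v)
      = (α + cosh u * sin u) ^ 2 + (-β + cosh u * cos u) ^ 2 := by
  have h := exp_neg_mul_sinh_add_cosh v
  simp only [lorR, pd2_trappedSurface, Matrix.cons_val_zero, Matrix.cons_val_one, Matrix.cons_val]
  linear_combination -cosh u ^ 2 * sin_sq_add_cos_sq u + cosh u ^ 2 * cosh_sq_sub_sinh_sq v
    + 2 * cosh u * (α * sin u - β * cos u) * h

lemma lorR_pd1_pd2_trappedSurface (α β u v : ℝ) :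
    lorR (pd1 (trappedSurface α β) u v) (pd2 (trappedSurface α β) u v) = 0 := by
  have h := exp_neg_mul_sinh_add_cosh v
  simp only [lorR, pd1_trappedSurface, pd2_trappedSurface, Matrix.cons_val_zero, Matrix.cons_val_one,
    Matrix.cons_val]
  linear_combination (sinh u * (α * sin u - β * cos u) - cosh u * (α * cos u + β * sin u)) * h

lemma lorR_smul_smul (c : ℝ) (x y : Fin 4 → ℝ) : lorR (c • x) (c • y) = c ^ 2 * lorR x y := by
  simp only [lorR, Pi.smul_apply, smul_eq_mul]
  ring

lemma lorR_self_cos_sin_sinh_cosh (u v : ℝ) :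
    lorR ![cos u, -sin u, sinh v, cosh v] ![cos u, -sin u, sinh v, cosh v] = 0 := by
  simp only [lorR, Matrix.cons_val_zero, Matrix.cons_val_one, Matrix.cons_val]
  linear_combination sin_sq_add_cos_sq u - cosh_sq_sub_sinh_sq v

lemma sub_sq_add_sub_sq_pos {a b x y : ℝ} (h : a ^ 2 + b ^ 2 < x ^ 2 + y ^ 2) :
    0 < (x - a) ^ 2 + (y - b) ^ 2 := by
  by_contra! hle
  have hx : x = a := by nlinarith [sq_nonneg (x - a), sq_nonneg (y - b)]
  have hy : y = b := by nlinarith [sq_nonneg (x - a), sq_nonneg (y - b)]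
  subst hx hy
  exact lt_irrefl _ h

/-- A two-parameter family of conformal spacelike parametrizations of marginally
trapped surfaces in 𝕃⁴ with nowhere vanishing mean curvature vector. -/
theorem stmt_19 (α β : ℝ) (X : ℝ → ℝ → Fin 4 → ℝ)
    (hX : ∀ (u v : ℝ), X u v = fun i =>
      α * ![u, v, -(Real.exp (-v) * Real.sin u), Real.exp (-v) * Real.sin u] i
      + β * ![v, -u, Real.exp (-v) * Real.cos u, -(Real.exp (-v) * Real.cos u)] i
      + ![Real.sinh u * Real.sin u, Real.sinh u * Real.cos u,
          Real.cosh u * Real.sinh v, Real.cosh u * Real.cosh v] i) :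
    (∀ (u v : ℝ), lorR (pd1 X u v) (pd1 X u v)
        = (α + Real.cosh u * Real.sin u) ^ 2 + (-β + Real.cosh u * Real.cos u) ^ 2) ∧
    (∀ (u v : ℝ), lorR (pd2 X u v) (pd2 X u v)
        = (α + Real.cosh u * Real.sin u) ^ 2 + (-β + Real.cosh u * Real.cos u) ^ 2) ∧
    (∀ (u v : ℝ), lorR (pd1 X u v) (pd2 X u v) = 0) ∧
    (∀ (u v : ℝ), (∀ i, pd11 X u v i + pd22 X u v i
        = 2 * Real.cosh u * ![Real.cos u, -Real.sin u, Real.sinh v, Real.cosh v] i) ∧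
      lorR (fun i => pd11 X u v i + pd22 X u v i)
        (fun i => pd11 X u v i + pd22 X u v i) = 0 ∧
      (fun i => pd11 X u v i + pd22 X u v i) ≠ (0 : Fin 4 → ℝ)) ∧
    (α ^ 2 + β ^ 2 < 1 → ∀ (u v : ℝ),
      0 < (α + Real.cosh u * Real.sin u) ^ 2 + (-β + Real.cosh u * Real.cos u) ^ 2) := by
  obtain rfl : X = trappedSurface α β := funext₂ hX
  refine ⟨lorR_pd1_trappedSurface α β, lorR_pd2_trappedSurface α β,
    lorR_pd1_pd2_trappedSurface α β, fun u v => ?_, ?_⟩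
  · have hΔ := pd11_add_pd22_trappedSurface α β u v
    refine ⟨fun i => congrFun hΔ i, ?_, fun h0 => ?_⟩
    · change lorR (pd11 (trappedSurface α β) u v + pd22 (trappedSurface α β) u v)
        (pd11 (trappedSurface α β) u v + pd22 (trappedSurface α β) u v) = 0
      rw [hΔ, lorR_smul_smul, lorR_self_cos_sin_sinh_cosh, mul_zero]
    · simpa [(cosh_pos u).ne', (cosh_pos v).ne'] using congrFun (hΔ.symm.trans h0) 3
  · intro hαβ u _
    have hcosh : (cosh u * sin u) ^ 2 + (cosh u * cos u) ^ 2 = cosh u ^ 2 := by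
      linear_combination cosh u ^ 2 * sin_sq_add_cos_sq u
    have hlt : (-α) ^ 2 + β ^ 2 < (cosh u * sin u) ^ 2 + (cosh u * cos u) ^ 2 := by
      rw [hcosh, neg_sq]
      nlinarith [one_le_cosh u]
    convert sub_sq_add_sub_sq_pos hlt using 2 <;> ring
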